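/- Let (u, v, pu, pv) solve the FLRW null geodesic system on an interval I with angular momentum L ≥ 0, and suppose the mass shell relation 4t²r²·pu·pv = L² holds at some point of I. Then the function s ↦ t(s)·(pu(s) + pv(s)) is constant on I. -/

import Mathlib

/-- The time coordinate `t = (v+u)²/4` along a curve in double null coordinates. -/
noncomputable def tOf (u v : ℝ → ℝ) (s : ℝ) : ℝ := (v s + u s) ^ 2 / 4

/-- The radial coordinate `r = v − u` along a curve in double null coordinates. -/
noncomputable def rOf (u v : ℝ → ℝ) (s : ℝ) : ℝ := v s - u s

/-- **The FLRW null geodesic system** with angular momentum `L` on a set `I ⊆ ℝ`: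
`u' = pu`, `v' = pv`,
`pu' = −t^{−1/2}·pu² − (1/2)(1/(2t^{1/2}) + 1/r)·L²/(t²r²)`,
`pv' = −t^{−1/2}·pv² − (1/2)(1/(2t^{1/2}) − 1/r)·L²/(t²r²)`,
where `t = (v+u)²/4` and `r = v−u` are required to satisfy `v+u > 0`, `r > 0` on `I`,
and `pu ≥ 0`, `pv ≥ 0` on `I`. -/
def FLRWGeodesicSystem (I : Set ℝ) (L : ℝ) (u v pu pv : ℝ → ℝ) : Prop :=
  (∀ s ∈ I, 0 < v s + u s) ∧
  (∀ s ∈ I, 0 < rOf u v s) ∧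
  (∀ s ∈ I, 0 ≤ pu s) ∧
  (∀ s ∈ I, 0 ≤ pv s) ∧
  (∀ s ∈ I, HasDerivAt u (pu s) s) ∧
  (∀ s ∈ I, HasDerivAt v (pv s) s) ∧
  (∀ s ∈ I, HasDerivAt pu
    (-(pu s) ^ 2 / Real.sqrt (tOf u v s)
      - 1 / 2 * (1 / (2 * Real.sqrt (tOf u v s)) + 1 / rOf u v s) * L ^ 2
          / ((tOf u v s) ^ 2 * (rOf u v s) ^ 2)) s) ∧
  (∀ s ∈ I, HasDerivAt pv
    (-(pv s) ^ 2 / Real.sqrt (tOf u v s)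
      - 1 / 2 * (1 / (2 * Real.sqrt (tOf u v s)) - 1 / rOf u v s) * L ^ 2
          / ((tOf u v s) ^ 2 * (rOf u v s) ^ 2)) s)

/-!
Write `a = √t = (v+u)/2`, so that `t = a²` and `t' = a (pu + pv)`. Substituting the equations for
`pu'` and `pv'` gives `(t (pu + pv))' = (4t²r² pu pv − L²) / (2a³r²)`, so the energy is conserved
exactly where the mass shell relation holds. The mass shell relation in turn is propagated: the
rescaled defect `4 t pu pv − L²/(t r²)` has vanishing derivative along every solution, so it is
zero on `I` as soon as it vanishes at one point.
-/

theorem Convex.eq_of_forall_hasDerivAt_zero {I : Set ℝ} (hI : Convex ℝ I) {f : ℝ → ℝ}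
    (hf : ∀ x ∈ I, HasDerivAt f 0 x) {x y : ℝ} (hx : x ∈ I) (hy : y ∈ I) : f x = f y := by
  have h := hI.norm_image_sub_le_of_norm_hasDerivWithin_le (C := 0)
    (fun z hz => (hf z hz).hasDerivWithinAt) (fun _ _ => by simp) hx hy
  simp only [zero_mul, norm_le_zero_iff, sub_eq_zero] at h
  exact h.symm

theorem tOf_eq_sq (u v : ℝ → ℝ) (s : ℝ) : tOf u v s = ((v s + u s) / 2) ^ 2 := by
  unfold tOf; ring

theorem sqrt_tOf {u v : ℝ → ℝ} {s : ℝ} (h : 0 ≤ v s + u s) :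
    √(tOf u v s) = (v s + u s) / 2 := by
  rw [tOf_eq_sq, Real.sqrt_sq (by linarith)]

theorem hasDerivAt_tOf {u v : ℝ → ℝ} {a b s : ℝ} (hu : HasDerivAt u a s)
    (hv : HasDerivAt v b s) : HasDerivAt (tOf u v) ((v s + u s) / 2 * (a + b)) s := by
  refine (((hv.add hu).pow 2).div_const 4).congr_deriv ?_
  simp only [Pi.add_apply]
  push_cast
  ring

noncomputable def massShellDefect (L : ℝ) (u v pu pv : ℝ → ℝ) (s : ℝ) : ℝ :=
  4 * tOf u v s * pu s * pv s - L ^ 2 / (tOf u v s * rOf u v s ^ 2)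

theorem massShellDefect_eq_zero_iff {L : ℝ} {u v pu pv : ℝ → ℝ} {s : ℝ} (ht : tOf u v s ≠ 0)
    (hr : rOf u v s ≠ 0) :
    massShellDefect L u v pu pv s = 0 ↔
      4 * tOf u v s ^ 2 * rOf u v s ^ 2 * pu s * pv s = L ^ 2 := by
  rw [massShellDefect, sub_eq_zero, eq_div_iff (by positivity)]
  constructor <;> intro h <;> linear_combination h

namespace FLRWGeodesicSystem

variable {I : Set ℝ} {L : ℝ} {u v pu pv : ℝ → ℝ} (h : FLRWGeodesicSystem I L u v pu pv)
include h

theorem tOf_pos {s : ℝ} (hs : s ∈ I) : 0 < tOf u v s := by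
  have := h.1 s hs
  unfold tOf
  positivity

theorem hasDerivAt_massShellDefect {s : ℝ} (hs : s ∈ I) :
    HasDerivAt (massShellDefect L u v pu pv) 0 s := by
  have hpos := h.tOf_pos hs
  obtain ⟨hA, hr, -, -, hu, hv, hpu, hpv⟩ := h
  have ht := hasDerivAt_tOf (hu s hs) (hv s hs)
  have hrs : rOf u v s ≠ 0 := (hr s hs).ne'
  have hAs : v s + u s ≠ 0 := (hA s hs).ne'
  refine ((((ht.const_mul 4).mul (hpu s hs)).mul (hpv s hs)).sub
    ((hasDerivAt_const s (L ^ 2)).div (ht.mul (((hv s hs).sub (hu s hs)).pow 2))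
      (mul_ne_zero hpos.ne' (pow_ne_zero 2 hrs)))).congr_deriv ?_
  simp only [Pi.mul_apply, Pi.sub_apply, Pi.pow_apply]
  rw [sqrt_tOf (hA s hs).le, tOf_eq_sq]
  unfold rOf at hrs ⊢
  field_simp
  ring

theorem massShellDefect_eq_zero (hI : Convex ℝ I) {s₀ : ℝ} (hs₀ : s₀ ∈ I)
    (hms : 4 * tOf u v s₀ ^ 2 * rOf u v s₀ ^ 2 * pu s₀ * pv s₀ = L ^ 2) {s : ℝ} (hs : s ∈ I) :
    massShellDefect L u v pu pv s = 0 := by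
  rw [hI.eq_of_forall_hasDerivAt_zero (fun x hx => h.hasDerivAt_massShellDefect hx) hs hs₀,
    massShellDefect_eq_zero_iff (h.tOf_pos hs₀).ne' (h.2.1 s₀ hs₀).ne']
  exact hms

theorem hasDerivAt_energy {s : ℝ} (hs : s ∈ I) :
    HasDerivAt (fun x => tOf u v x * (pu x + pv x))
      (massShellDefect L u v pu pv s / (v s + u s)) s := by
  obtain ⟨hA, hr, -, -, hu, hv, hpu, hpv⟩ := h
  have hrs : rOf u v s ≠ 0 := (hr s hs).ne'
  have hAs : v s + u s ≠ 0 := (hA s hs).ne'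
  refine ((hasDerivAt_tOf (hu s hs) (hv s hs)).mul ((hpu s hs).add (hpv s hs))).congr_deriv ?_
  rw [Pi.add_apply, massShellDefect, sqrt_tOf (hA s hs).le, tOf_eq_sq]
  field_simp
  ring

end FLRWGeodesicSystem

theorem flrw_geodesic_energy_constant_general (I : Set ℝ) (hI : Convex ℝ I) (L : ℝ)
    (u v pu pv : ℝ → ℝ) (hsys : FLRWGeodesicSystem I L u v pu pv)
    (hms : ∃ s ∈ I, 4 * (tOf u v s) ^ 2 * (rOf u v s) ^ 2 * pu s * pv s = L ^ 2) :
    ∀ s₁ ∈ I, ∀ s₂ ∈ I,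
      tOf u v s₁ * (pu s₁ + pv s₁) = tOf u v s₂ * (pu s₂ + pv s₂) := by
  obtain ⟨s₀, hs₀, hms₀⟩ := hms
  have hconst : ∀ s ∈ I, HasDerivAt (fun s => tOf u v s * (pu s + pv s)) 0 s := fun s hs => by
    simpa [hsys.massShellDefect_eq_zero hI hs₀ hms₀ hs] using hsys.hasDerivAt_energy hs
  exact fun s₁ hs₁ s₂ hs₂ => hI.eq_of_forall_hasDerivAt_zero hconst hs₁ hs₂

/-- **Conservation of the particle energy along FLRW null geodesics.**
If `(u,v,pu,pv)` solves the FLRW null geodesic system on an interval `I` with angular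
momentum `L ≥ 0` and the mass shell relation `4t²r²·pu·pv = L²` holds at some point of
`I`, then `s ↦ t(s)·(pu(s) + pv(s))` is constant on `I`. -/
theorem flrw_geodesic_energy_constant (I : Set ℝ) (hI : Convex ℝ I) (L : ℝ) (hL : 0 ≤ L)
    (u v pu pv : ℝ → ℝ) (hsys : FLRWGeodesicSystem I L u v pu pv)
    (hms : ∃ s ∈ I, 4 * (tOf u v s) ^ 2 * (rOf u v s) ^ 2 * pu s * pv s = L ^ 2) :
    ∀ s₁ ∈ I, ∀ s₂ ∈ I,
      tOf u v s₁ * (pu s₁ + pv s₁) = tOf u v s₂ * (pu s₂ + pv s₂) :=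
  flrw_geodesic_energy_constant_general I hI L u v pu pv hsys hms
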